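/- arXiv:1412.0776 — 2 statements merged into one kernel-verified Lean document; each statement's English description precedes it below -/
import Mathlib

section
/- Lemma (flag-transitive subgroups of the group of a power complex, Lemma 4.3). Let 𝒦 be a family of subsets of V with ∅ ∈ 𝒦. Let U be a subgroup of Equiv.Perm N acting transitively on N, and let Λ be a subgroup of Aut(𝒦) acting transitively on the set of maximal chains of (𝒦, ⊆). Then every θ_{σ,φ} with σ ∈ ∏_{i∈V} U and φ ∈ Λ maps ℱ bijectively onto ℱ, and the group {θ_{σ,φ} : σ ∈ ∏_{i∈V} U, φ ∈ Λ} acts transitively on the set of maximal chains of (ℱ, ⊆). (That is, U ≀ Λ is a flag-transitive subgroup of the automorphism group of the power complex n^𝒦.) -/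
/-!
Every flag of `n^𝒦` contains a vertex `{ε}`: since `∅ ∈ 𝒦`, the vertex `ε` of its least face is
comparable with all of its faces. Hence all faces of the flag contain `ε`, and the faces of `n^𝒦`
containing `ε` are exactly the `F(ε)` with `F ∈ 𝒦`. For `n ≥ 2` the map `F ↦ F(ε)` is an order
embedding, so the flag is the image of a flag of `𝒦`. As `θ_{σ,φ}` sends `F(ε)` to
`φ(F)(θ_{σ,φ} ε)`, transitivity of `Λ` on the flags of `𝒦` moves the chain of shapes, and
transitivity of `U` in each coordinate moves the base vertex.
-/

/-- The face `F(ε)` of the power complex. -/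
def face (n v : ℕ) (F : Set (Fin v)) (ε : Fin v → Fin n) : Set (Fin v → Fin n) :=
  {η | ∀ i ∉ F, η i = ε i}

/-- The power complex `n^𝒦`, as a family of subsets of `V → N`. -/
def powerComplex (n v : ℕ) (𝒦 : Set (Set (Fin v))) : Set (Set (Fin v → Fin n)) :=
  {A | ∃ F ∈ 𝒦, ∃ ε : Fin v → Fin n, A = face n v F ε}

/-- The permutation `θ_{σ,φ}` of `V → N`. -/
def theta {n v : ℕ} (σ : Fin v → Equiv.Perm (Fin n)) (φ : Equiv.Perm (Fin v)) :
    Equiv.Perm (Fin v → Fin n) where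
  toFun η i := σ (φ⁻¹ i) (η (φ⁻¹ i))
  invFun η i := (σ i)⁻¹ (η (φ i))
  left_inv η := by funext i; simp
  right_inv η := by funext i; simp

/-- `C` is a maximal chain of the family `S` partially ordered by inclusion. -/
def IsMaxChainIn {α : Type*} (S : Set (Set α)) (C : Set (Set α)) : Prop :=
  C ⊆ S ∧ IsChain (· ⊆ ·) C ∧
    ∀ C' : Set (Set α), C' ⊆ S → IsChain (· ⊆ ·) C' → C ⊆ C' → C' = C

section MaxChain

variable {α β : Type*} {S C : Set (Set α)}

theorem IsMaxChainIn.mem_of_forall_subset_or_subset (hC : IsMaxChainIn S C) {a : Set α}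
    (ha : a ∈ S) (hcomp : ∀ b ∈ C, a ⊆ b ∨ b ⊆ a) : a ∈ C := by
  obtain ⟨hCS, hchain, hmax⟩ := hC
  rw [← hmax (insert a C) (Set.insert_subset ha hCS) (hchain.insert fun b hb _ => hcomp b hb)
    (Set.subset_insert a C)]
  exact Set.mem_insert a C

theorem IsMaxChainIn.nonempty (hC : IsMaxChainIn S C) (hS : S.Nonempty) : C.Nonempty := by
  obtain ⟨a, ha⟩ := hS
  rcases C.eq_empty_or_nonempty with rfl | hne
  · exact ⟨a, hC.mem_of_forall_subset_or_subset ha fun b hb => absurd hb (Set.notMem_empty b)⟩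
  · exact hne

theorem IsChain.mem_of_singleton_mem {D : Set (Set α)} (hD : IsChain (· ⊆ ·) D) {x : α}
    (hx : {x} ∈ D) {B : Set α} (hB : B ∈ D) (hne : B.Nonempty) : x ∈ B := by
  rcases eq_or_ne {x} B with rfl | hxB
  · rfl
  rcases hD hx hB hxB with h | h
  · exact h rfl
  · exact absurd (hne.subset_singleton_iff.mp h).symm hxB

variable {f : Set α → Set β} {T : Set (Set β)}

theorem IsChain.image_of_subset_iff (hf : ∀ s t, f s ⊆ f t ↔ s ⊆ t)
    (hC : IsChain (· ⊆ ·) C) : IsChain (· ⊆ ·) (f '' C) :=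
  hC.image_of_map_rel _ _ f fun s t => (hf s t).2

theorem IsChain.preimage_of_subset_iff (hf : ∀ s t, f s ⊆ f t ↔ s ⊆ t) {D : Set (Set β)}
    (hD : IsChain (· ⊆ ·) D) :
    IsChain (· ⊆ ·) (f ⁻¹' D) :=
  hD.preimage _ _ f (fun s t h => subset_antisymm ((hf s t).1 h.subset) ((hf t s).1 h.superset))
    fun s t => (hf s t).1

theorem IsMaxChainIn.preimage_of_subset_iff (hf : ∀ s t, f s ⊆ f t ↔ s ⊆ t)
    (hST : f ⁻¹' T = S) {D : Set (Set β)}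
    (hD : IsMaxChainIn T D) (hDf : D ⊆ Set.range f) : IsMaxChainIn S (f ⁻¹' D) := by
  obtain ⟨hDT, hchain, hmax⟩ := hD
  refine ⟨fun s hs => hST ▸ hDT hs, hchain.preimage_of_subset_iff hf, fun C' hC'S hC' hDC' => ?_⟩
  have himage : f '' C' = D := by
    refine hmax _ ?_ (hC'.image_of_subset_iff hf) ?_
    · rintro _ ⟨s, hs, rfl⟩
      exact (hST ▸ hC'S hs : s ∈ f ⁻¹' T)
    · rw [← Set.image_preimage_eq_of_subset hDf]
      exact Set.image_mono hDC'
  exact subset_antisymm (himage ▸ Set.subset_preimage_image f C') hDC'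

end MaxChain

section PowerComplex

variable {n v : ℕ} {F G : Set (Fin v)} {ε δ : Fin v → Fin n} {𝒦 : Set (Set (Fin v))}

theorem mem_face_self (F : Set (Fin v)) (ε : Fin v → Fin n) : ε ∈ face n v F ε :=
  fun _ _ => rfl

theorem face_empty (ε : Fin v → Fin n) : face n v ∅ ε = {ε} := by
  ext η
  simpa [face] using funext_iff.symm

theorem face_eq_face_of_mem (h : ε ∈ face n v G δ) : face n v G δ = face n v G ε := by
  ext η
  exact forall₂_congr fun i hi => by rw [h i hi]

theorem face_subset_face_iff [Nontrivial (Fin n)] :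
    face n v F ε ⊆ face n v G δ ↔ F ⊆ G ∧ ∀ i ∉ G, ε i = δ i := by
  refine ⟨fun h => ⟨fun i hiF => ?_, fun i hi => h (mem_face_self F ε) i hi⟩, ?_⟩
  · by_contra hiG
    obtain ⟨a, ha⟩ := exists_ne (ε i)
    have hmove : Function.update ε i a ∈ face n v F ε := fun j hj =>
      Function.update_of_ne (fun hji : j = i => hj (hji ▸ hiF)) a ε
    have hfixed := h hmove i hiG
    rw [Function.update_self] at hfixed
    exact ha (hfixed.trans (h (mem_face_self F ε) i hiG).symm)
  · rintro ⟨hFG, hεδ⟩ η hη i hi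
    rw [hη i (fun h => hi (hFG h)), hεδ i hi]

theorem face_subset_face_iff_subset [Nontrivial (Fin n)] (ε : Fin v → Fin n) (F G : Set (Fin v)) :
    face n v F ε ⊆ face n v G ε ↔ F ⊆ G := by
  simp [face_subset_face_iff]

theorem preimage_face_powerComplex [Nontrivial (Fin n)] (ε : Fin v → Fin n) :
    (face n v · ε) ⁻¹' powerComplex n v 𝒦 = 𝒦 := by
  ext F
  refine ⟨fun ⟨G, hG, δ, h⟩ => ?_, fun hF => ⟨F, hF, ε, rfl⟩⟩
  rwa [(face_subset_face_iff.mp h.subset).1.antisymm (face_subset_face_iff.mp h.superset).1]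

theorem subset_range_face_of_singleton_mem {D : Set (Set (Fin v → Fin n))}
    (hD𝒦 : D ⊆ powerComplex n v 𝒦) (hD : IsChain (· ⊆ ·) D) (hε : {ε} ∈ D) :
    D ⊆ Set.range (face n v · ε) := by
  intro B hB
  obtain ⟨G, -, δ, rfl⟩ := hD𝒦 hB
  exact ⟨G, (face_eq_face_of_mem (hD.mem_of_singleton_mem hε hB ⟨δ, mem_face_self G δ⟩)).symm⟩

theorem IsMaxChainIn.exists_eq_image_face [Nontrivial (Fin n)] (hempty : ∅ ∈ 𝒦)
    {D : Set (Set (Fin v → Fin n))} (hD : IsMaxChainIn (powerComplex n v 𝒦) D) :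
    ∃ (ε : Fin v → Fin n) (𝒞 : Set (Set (Fin v))),
      IsMaxChainIn 𝒦 𝒞 ∧ D = (face n v · ε) '' 𝒞 := by
  have hDne : D.Nonempty :=
    hD.nonempty ⟨_, ∅, hempty, Classical.arbitrary (Fin v → Fin n), rfl⟩
  obtain ⟨A₀, hA₀min⟩ := exists_minimal_of_wellFoundedLT (· ∈ D) hDne
  obtain ⟨F₀, -, ε, rfl⟩ := hD.1 hA₀min.prop
  have hleast : ∀ B ∈ D, face n v F₀ ε ⊆ B := fun B hB =>
    (hD.2.1.total hA₀min.prop hB).elim id (hA₀min.le_of_le hB)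
  have hε : {ε} ∈ D :=
    hD.mem_of_forall_subset_or_subset ⟨∅, hempty, ε, (face_empty ε).symm⟩ fun B hB =>
      Or.inl (Set.singleton_subset_iff.mpr (hleast B hB (mem_face_self F₀ ε)))
  have hDε := subset_range_face_of_singleton_mem hD.1 hD.2.1 hε
  exact ⟨ε, _, hD.preimage_of_subset_iff (face_subset_face_iff_subset ε)
    (preimage_face_powerComplex ε) hDε, (Set.image_preimage_eq_of_subset hDε).symm⟩

end PowerComplex

section Theta

variable {n v : ℕ} (σ : Fin v → Equiv.Perm (Fin n)) (φ : Equiv.Perm (Fin v))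

@[simp]
theorem theta_apply (η : Fin v → Fin n) (i : Fin v) : theta σ φ η i = σ (φ⁻¹ i) (η (φ⁻¹ i)) :=
  rfl

@[simp]
theorem theta_symm_apply (η : Fin v → Fin n) (i : Fin v) :
    (theta σ φ).symm η i = (σ i)⁻¹ (η (φ i)) :=
  rfl

theorem theta_image_face (F : Set (Fin v)) (ε : Fin v → Fin n) :
    theta σ φ '' face n v F ε = face n v (φ '' F) (theta σ φ ε) := by
  ext η
  rw [Equiv.image_eq_preimage_symm]
  simp only [face, Set.mem_preimage, Set.mem_ofPred_eq]
  refine φ.forall_congr fun {i} => ?_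
  simp [Equiv.eq_symm_apply, eq_comm]

theorem bijOn_image_theta {𝒦 : Set (Set (Fin v))} (hφ : ∀ F : Set (Fin v), F ∈ 𝒦 ↔ φ '' F ∈ 𝒦) :
    Set.BijOn (theta σ φ '' ·) (powerComplex n v 𝒦) (powerComplex n v 𝒦) := by
  refine ⟨?_, Set.image_injective.mpr (theta σ φ).injective |>.injOn, ?_⟩
  · rintro _ ⟨F, hF, ε, rfl⟩
    exact ⟨φ '' F, (hφ F).mp hF, theta σ φ ε, theta_image_face σ φ F ε⟩
  · rintro _ ⟨G, hG, δ, rfl⟩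
    have hG' : φ '' (φ.symm '' G) = G := φ.image_symm_image G
    refine ⟨_, ⟨φ.symm '' G, (hφ _).mpr (by rwa [hG']), (theta σ φ).symm δ, rfl⟩, ?_⟩
    dsimp only
    rw [theta_image_face, hG', Equiv.apply_symm_apply]

theorem exists_theta_apply_eq {U : Subgroup (Equiv.Perm (Fin n))}
    (hU : ∀ x y : Fin n, ∃ u ∈ U, u x = y) (ε ε' : Fin v → Fin n) :
    ∃ σ : Fin v → Equiv.Perm (Fin n), (∀ i, σ i ∈ U) ∧ theta σ φ ε = ε' := by
  choose u hu hux using fun j => hU (ε j) (ε' (φ j))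
  exact ⟨u, hu, funext fun i => by simp [hux]⟩

end Theta

theorem wreath_flag_transitive_general (n v : ℕ) (hn : 2 ≤ n)
    (𝒦 : Set (Set (Fin v))) (hempty : ∅ ∈ 𝒦)
    (U : Subgroup (Equiv.Perm (Fin n)))
    (hU : ∀ x y : Fin n, ∃ u ∈ U, u x = y)
    (Λ : Subgroup (Equiv.Perm (Fin v)))
    (hΛAut : ∀ φ ∈ Λ, ∀ F : Set (Fin v), F ∈ 𝒦 ↔ φ '' F ∈ 𝒦)
    (hΛtrans : ∀ 𝒞 𝒞' : Set (Set (Fin v)), IsMaxChainIn 𝒦 𝒞 → IsMaxChainIn 𝒦 𝒞' →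
      ∃ φ ∈ Λ, (fun F => φ '' F) '' 𝒞 = 𝒞') :
    (∀ (σ : Fin v → Equiv.Perm (Fin n)) (φ : Equiv.Perm (Fin v)),
      (∀ i, σ i ∈ U) → φ ∈ Λ →
      Set.BijOn (fun A => theta σ φ '' A) (powerComplex n v 𝒦) (powerComplex n v 𝒦)) ∧
    (∀ D D' : Set (Set (Fin v → Fin n)),
      IsMaxChainIn (powerComplex n v 𝒦) D → IsMaxChainIn (powerComplex n v 𝒦) D' →
      ∃ (σ : Fin v → Equiv.Perm (Fin n)) (φ : Equiv.Perm (Fin v)),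
        (∀ i, σ i ∈ U) ∧ φ ∈ Λ ∧ (fun A => theta σ φ '' A) '' D = D') := by
  have : Nontrivial (Fin n) := Fin.nontrivial_iff_two_le.mpr hn
  refine ⟨fun σ φ _ hφ => bijOn_image_theta σ φ (hΛAut φ hφ), fun D D' hD hD' => ?_⟩
  obtain ⟨ε, 𝒞, h𝒞, rfl⟩ := hD.exists_eq_image_face hempty
  obtain ⟨ε', 𝒞', h𝒞', rfl⟩ := hD'.exists_eq_image_face hempty
  obtain ⟨φ, hφ, rfl⟩ := hΛtrans 𝒞 𝒞' h𝒞 h𝒞'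
  obtain ⟨σ, hσ, rfl⟩ := exists_theta_apply_eq φ hU ε ε'
  exact ⟨σ, φ, hσ, hφ, by simp only [Set.image_image, theta_image_face]⟩

/-- Lemma 4.3: if `U ≤ S_n` is transitive on `N` and `Λ ≤ Aut(𝒦)` is transitive on the maximal
chains (flags) of `𝒦`, then the elements `θ_{σ,φ}` with `σ ∈ U^v`, `φ ∈ Λ` map `ℱ` bijectively
onto itself, and the group `U ≀ Λ` of all such elements acts transitively on the maximal chains
of `ℱ`; i.e. `U ≀ Λ` is a flag-transitive subgroup of the automorphism group of `n^𝒦`. -/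
theorem wreath_flag_transitive (n v : ℕ) (hn : 2 ≤ n) (hv : 1 ≤ v)
    (𝒦 : Set (Set (Fin v))) (hempty : ∅ ∈ 𝒦)
    (U : Subgroup (Equiv.Perm (Fin n)))
    (hU : ∀ x y : Fin n, ∃ u ∈ U, u x = y)
    (Λ : Subgroup (Equiv.Perm (Fin v)))
    (hΛAut : ∀ φ ∈ Λ, ∀ F : Set (Fin v), F ∈ 𝒦 ↔ φ '' F ∈ 𝒦)
    (hΛtrans : ∀ 𝒞 𝒞' : Set (Set (Fin v)), IsMaxChainIn 𝒦 𝒞 → IsMaxChainIn 𝒦 𝒞' →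
      ∃ φ ∈ Λ, (fun F => φ '' F) '' 𝒞 = 𝒞') :
    (∀ (σ : Fin v → Equiv.Perm (Fin n)) (φ : Equiv.Perm (Fin v)),
      (∀ i, σ i ∈ U) → φ ∈ Λ →
      Set.BijOn (fun A => theta σ φ '' A) (powerComplex n v 𝒦) (powerComplex n v 𝒦)) ∧
    (∀ D D' : Set (Set (Fin v → Fin n)),
      IsMaxChainIn (powerComplex n v 𝒦) D → IsMaxChainIn (powerComplex n v 𝒦) D' →
      ∃ (σ : Fin v → Equiv.Perm (Fin n)) (φ : Equiv.Perm (Fin v)),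
        (∀ i, σ i ∈ U) ∧ φ ∈ Λ ∧ (fun A => theta σ φ '' A) '' D = D') :=
  wreath_flag_transitive_general n v hn 𝒦 hempty U hU Λ hΛAut hΛtrans
end

section
/- Lemma (orbit form of subgroups generated by one coordinate copy and a subgroup of the acting group). Let H be a subgroup of G and x₀ ∈ V. Then the subgroup of Γ = (V → ZMod n) ⋊ G generated by C_{x₀} together with {(0, h) : h ∈ H} equals {(w, h) ∈ Γ : h ∈ H and w(i) = 0 for every i ∈ V not in the orbit of x₀ under π(H)}. In particular, if π(G) acts transitively on V, then the subgroup of Γ generated by C_{x₀} and {(0, g) : g ∈ G} is all of Γ. -/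
/-- The coordinate-permuting action on a direct power of a group: `(φ·σ)_i = σ_{φ⁻¹ i}`. -/
def permPi (v : ℕ) (G : Type*) [Group G] : Equiv.Perm (Fin v) →* MulAut (Fin v → G) where
  toFun φ :=
    { toFun := fun σ i => σ (φ⁻¹ i)
      invFun := fun σ i => σ (φ i)
      left_inv := fun σ => by funext i; simp
      right_inv := fun σ => by funext i; simp
      map_mul' := fun σ τ => rfl }
  map_one' := by ext σ i; simp
  map_mul' := fun φ ψ => by ext σ i; simp [mul_inv_rev]

section

variable {G : Type*} [Group G] (n v : ℕ) (π : G →* Equiv.Perm (Fin v))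

/-- The semidirect product `Γ = (V → ZMod n) ⋊ G`, where `g ∈ G` acts on functions by
`(g·w)(i) = w(π(g)⁻¹ i)`.  (The additive group `ZMod n` is written multiplicatively.) -/
abbrev GammaSDP := (Fin v → Multiplicative (ZMod n))
  ⋊[(permPi v (Multiplicative (ZMod n))).comp π] G

/-- The canonical copy `C_x` of `ZMod n` at coordinate `x`:
the subgroup `{(w, 1) : w i = 0 for all i ≠ x}` of `Γ`. -/
def coordCopy (x : Fin v) : Subgroup (GammaSDP n v π) where
  carrier := {p | p.right = 1 ∧ ∀ i, i ≠ x → Multiplicative.toAdd (p.left i) = 0}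
  one_mem' := by
    refine ⟨rfl, fun i _ => ?_⟩
    simp [SemidirectProduct.one_left]
  mul_mem' := by
    rintro p q ⟨hp1, hp2⟩ ⟨hq1, hq2⟩
    refine ⟨by simp [SemidirectProduct.mul_right, hp1, hq1], fun i hi => ?_⟩
    have h : (p * q).left i = p.left i *
        (((permPi v (Multiplicative (ZMod n))).comp π) p.right q.left) i := rfl
    rw [h]
    have h2 : (((permPi v (Multiplicative (ZMod n))).comp π) p.right q.left) i
        = q.left ((π p.right)⁻¹ i) := rfl
    rw [h2, hp1]
    simp only [map_one]
    have h3 : ((1 : Equiv.Perm (Fin v)))⁻¹ i = i := rfl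
    rw [h3, toAdd_mul, hp2 i hi, hq2 i hi, add_zero]
  inv_mem' := by
    rintro p ⟨hp1, hp2⟩
    refine ⟨by simp [SemidirectProduct.inv_right, hp1], fun i hi => ?_⟩
    have h : (p⁻¹).left i = ((((permPi v (Multiplicative (ZMod n))).comp π) p.right⁻¹)
        p.left⁻¹) i := rfl
    rw [h]
    have h2 : ((((permPi v (Multiplicative (ZMod n))).comp π) p.right⁻¹) p.left⁻¹) i
        = (p.left ((π p.right⁻¹)⁻¹ i))⁻¹ := rfl
    rw [h2, hp1]
    simp [hp2 i hi]

variable (x₀ : Fin v)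

/-!
Conjugating `C_{x₀}` by `h ∈ H` gives the coordinate copy `C_{π h x₀}`, so the subgroup generated
by `C_{x₀}` and `H` contains every `(w, 1)` with `w` supported on the orbit `π(H) x₀` (a sum of
such coordinate copies), hence every such `(w, h)` with `h ∈ H`. Conversely these pairs form a
subgroup, because the orbit and its complement are `π(H)`-invariant, and this subgroup contains
both generating pieces.
-/

theorem permPi_apply_mulSingle {M : Type*} [Group M] (σ : Equiv.Perm (Fin v)) (x : Fin v)
    (a : M) : permPi v M σ (Pi.mulSingle x a : Fin v → M) = Pi.mulSingle (σ x) a := by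
  funext i
  change (Pi.mulSingle x a : Fin v → M) (σ⁻¹ i) = _
  simp only [Pi.mulSingle_apply, Equiv.Perm.inv_eq_iff_eq]

theorem perm_apply_mem_orbit {H : Subgroup G} {g : G} (hg : g ∈ H) {x i : Fin v}
    (hi : ∃ h ∈ H, π h x = i) : ∃ h ∈ H, π h x = π g i := by
  obtain ⟨h, hh, rfl⟩ := hi
  exact ⟨g * h, H.mul_mem hg hh, by rw [map_mul, Equiv.Perm.mul_apply]⟩

def orbitSupported (H : Subgroup G) : Subgroup (GammaSDP n v π) where
  carrier := {p | p.right ∈ H ∧ ∀ i : Fin v, (¬ ∃ h ∈ H, π h x₀ = i) →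
      Multiplicative.toAdd (p.left i) = 0}
  one_mem' := ⟨H.one_mem, fun _ _ => rfl⟩
  mul_mem' := by
    rintro p q ⟨hp, hpw⟩ ⟨hq, hqw⟩
    refine ⟨H.mul_mem hp hq, fun i hi => ?_⟩
    change Multiplicative.toAdd (p.left i * q.left ((π p.right)⁻¹ i)) = 0
    rw [toAdd_mul, hpw i hi, hqw _ fun h' => hi ?_, add_zero]
    simpa using perm_apply_mem_orbit _ π hp h'
  inv_mem' := by
    rintro p ⟨hp, hpw⟩
    refine ⟨H.inv_mem hp, fun i hi => ?_⟩
    change Multiplicative.toAdd (p.left ((π p.right⁻¹)⁻¹ i))⁻¹ = 0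
    rw [toAdd_inv, hpw _ fun h' => hi ?_, neg_zero]
    simpa using perm_apply_mem_orbit _ π (H.inv_mem hp) h'

theorem inl_mulSingle_mem_coordCopy (x : Fin v) (a : Multiplicative (ZMod n)) :
    SemidirectProduct.inl (Pi.mulSingle x a) ∈ coordCopy n v π x :=
  ⟨rfl, fun i hi => by simp [hi]⟩

theorem coordCopy_sup_le_orbitSupported (H : Subgroup G) :
    coordCopy n v π x₀ ⊔ H.map SemidirectProduct.inr ≤ orbitSupported n v π x₀ H := by
  refine sup_le ?_ ?_
  · rintro p ⟨hp, hpw⟩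
    exact ⟨hp ▸ H.one_mem, fun i hi => hpw i fun hix => hi ⟨1, H.one_mem, by simp [hix]⟩⟩
  · rintro _ ⟨g, hg, rfl⟩
    exact ⟨hg, fun _ _ => rfl⟩

theorem inl_mulSingle_mem_coordCopy_sup {H : Subgroup G} {g : G} (hg : g ∈ H)
    (a : Multiplicative (ZMod n)) :
    SemidirectProduct.inl (Pi.mulSingle (π g x₀) a) ∈
      coordCopy n v π x₀ ⊔ H.map SemidirectProduct.inr := by
  rw [← permPi_apply_mulSingle, ← MonoidHom.comp_apply (permPi v _) π, SemidirectProduct.inl_aut]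
  exact mul_mem (mul_mem (Subgroup.mem_sup_right ⟨g, hg, rfl⟩)
    (Subgroup.mem_sup_left (inl_mulSingle_mem_coordCopy n v π x₀ a)))
    (Subgroup.mem_sup_right ⟨g⁻¹, H.inv_mem hg, rfl⟩)

theorem orbitSupported_le_coordCopy_sup (H : Subgroup G) :
    orbitSupported n v π x₀ H ≤ coordCopy n v π x₀ ⊔ H.map SemidirectProduct.inr := by
  rintro p ⟨hp, hpw⟩
  rw [← SemidirectProduct.inl_left_mul_inr_right p]
  refine mul_mem ?_ (Subgroup.mem_sup_right ⟨p.right, hp, rfl⟩)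
  change p.left ∈ (coordCopy n v π x₀ ⊔ H.map SemidirectProduct.inr).comap SemidirectProduct.inl
  rw [← Finset.univ_prod_mulSingle p.left]
  refine prod_mem fun i _ => ?_
  by_cases hi : ∃ h ∈ H, π h x₀ = i
  · obtain ⟨h, hh, rfl⟩ := hi
    exact inl_mulSingle_mem_coordCopy_sup n v π x₀ hh _
  · rw [toAdd_eq_zero.mp (hpw i hi), Pi.mulSingle_one]
    exact one_mem _

theorem coordCopy_sup_eq_orbitSupported (H : Subgroup G) :
    coordCopy n v π x₀ ⊔ H.map SemidirectProduct.inr = orbitSupported n v π x₀ H :=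
  le_antisymm (coordCopy_sup_le_orbitSupported n v π x₀ H)
    (orbitSupported_le_coordCopy_sup n v π x₀ H)

theorem orbitSupported_top_of_transitive (htrans : ∀ x y : Fin v, ∃ g : G, π g x = y) :
    orbitSupported n v π x₀ ⊤ = ⊤ := by
  refine eq_top_iff.mpr fun p _ => ⟨trivial, fun i hi => absurd ?_ hi⟩
  obtain ⟨g, hg⟩ := htrans x₀ i
  exact ⟨g, trivial, hg⟩

theorem coordCopy_sup_subgroup (H : Subgroup G) :
    (∀ p : GammaSDP n v π,
      p ∈ coordCopy n v π x₀ ⊔ Subgroup.map SemidirectProduct.inr H ↔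
        (p.right ∈ H ∧ ∀ i : Fin v, (¬ ∃ h ∈ H, π h x₀ = i) →
          Multiplicative.toAdd (p.left i) = 0)) ∧
    ((∀ x y : Fin v, ∃ g : G, π g x = y) →
      coordCopy n v π x₀ ⊔ Subgroup.map SemidirectProduct.inr (⊤ : Subgroup G) = ⊤) := by
  refine ⟨fun p => by rw [coordCopy_sup_eq_orbitSupported]; rfl, fun htrans => ?_⟩
  rw [coordCopy_sup_eq_orbitSupported, orbitSupported_top_of_transitive n v π x₀ htrans]

end
end
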